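/- arXiv:1712.09318 — 2 statements merged into one kernel-verified Lean document; each statement's English description precedes it below -/
import Mathlib

section
/- Let {f_t : t ∈ T} be a family of functions on ℝⁿ with pointwise supremum f. Then for every t ∈ T, dom f_t* ⊆ dom f* and int(dom f_t*) ⊆ int(dom f*). If, in addition, f* is proper, f** = sup_{t∈T} f_t**, and {f_t} is an increasing family of epi-pointed functions, then ∪_{t∈T} int(dom f_t*) = int(dom f*) and ∪_{t∈T} int(epi f_t*) = int(epi f*). -/
open scoped RealInnerProductSpace Pointwise
open Set Filter

noncomputable section

/-- `En n` is the Euclidean space `ℝⁿ`. -/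
abbrev En (n : ℕ) := EuclideanSpace ℝ (Fin n)

/-- The epigraph of an extended-real-valued function. -/
def epiS {n : ℕ} (g : En n → EReal) : Set (En n × ℝ) := {p | g p.1 ≤ (p.2 : EReal)}

/-- The Fenchel conjugate `g*`. -/
def conjF {n : ℕ} (g : En n → EReal) (y : En n) : EReal :=
  ⨆ x, (⟪y, x⟫ : EReal) - g x

/-- The effective domain of `g`. -/
def dm {n : ℕ} (g : En n → EReal) : Set (En n) := {x | g x < ⊤}

/-- `g` is proper: never `-∞` and not identically `+∞`. -/
def ProperF {n : ℕ} (g : En n → EReal) : Prop := (∃ x, g x < ⊤) ∧ ∀ x, ⊥ < g x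

/-- The ε-subdifferential `∂_ε g(x)` (empty when `g x` is not finite). -/
def eSub {n : ℕ} (g : En n → EReal) (ε : ℝ) (x : En n) : Set (En n) :=
  {y | ∃ r : ℝ, g x = (r : EReal) ∧ ∀ z, ((⟪y, z - x⟫ + r - ε : ℝ) : EReal) ≤ g z}

/-- The indicator function `δ_A` (0 on `A`, `+∞` outside). -/
def indE {n : ℕ} (A : Set (En n)) (x : En n) : EReal :=
  Set.indicator Aᶜ (fun _ => (⊤ : EReal)) x

/-- The ε-normal set `N^ε_A(x) = ∂_ε δ_A(x)`. -/
def eNormal {n : ℕ} (A : Set (En n)) (ε : ℝ) (x : En n) : Set (En n) :=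
  eSub (indE A) ε x

/-- `Γ₀`: proper, lower semicontinuous, convex. -/
def Gamma0 {n : ℕ} (g : En n → EReal) : Prop :=
  ProperF g ∧ LowerSemicontinuous g ∧ Convex ℝ (epiS g)

/-- Epi-pointed: `g*` is proper with nonempty interior of its domain. -/
def EpiPointed {n : ℕ} (g : En n → EReal) : Prop :=
  ProperF (conjF g) ∧ (interior (dm (conjF g))).Nonempty

/-- The closed convex hull `c̄o g`: the function whose epigraph is the closed
convex hull of `epi g`. -/
def cchF {n : ℕ} (g : En n → EReal) (x : En n) : EReal :=
  sInf ((fun r : ℝ => (r : EReal)) '' {r | (x, r) ∈ closure (convexHull ℝ (epiS g))})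

/-- The convex hull `co g`: the function whose epigraph is the convex hull of `epi g`. -/
def coF {n : ℕ} (g : En n → EReal) (x : En n) : EReal :=
  sInf ((fun r : ℝ => (r : EReal)) '' {r | (x, r) ∈ convexHull ℝ (epiS g)})

/-- Membership in the generalized simplex `Δ(T)`. -/
def inSimplex {T : Type*} (l : T →₀ ℝ) : Prop :=
  (∀ t, 0 ≤ l t ∧ l t ≤ 1) ∧ (∑ t ∈ l.support, l t) = 1

/-- Membership in `Δ^ε(T)`. -/
def inDelta {T : Type*} (ε : ℝ) (e : T →₀ ℝ) : Prop :=
  (∀ t, 0 ≤ e t ∧ e t ≤ ε) ∧ (∑ t ∈ e.support, e t) = ε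

end


/-!
Since `f_t ≤ f`, we have `f* ≤ f_t*`, which gives the inclusions. Conversely, `epi f*` lies in
the closed convex hull of `⋃ epi f_t*`: a point of `epi f*` outside it could be separated from it
by a hyperplane, which can be made non-vertical by tilting it with the affine minorant of `f*`
coming from a point of `dom f`; such a hyperplane is a pair `(w, γ)` with
`f_t**(w) ≤ γ < f**(w)` for all `t`, contradicting `f** = sup f_t**`. For an increasing family
over a directed set, `⋃ epi f_t*` is already convex. In finite dimension the interior of the
closure of a convex set with nonempty interior is its interior, and a point interior to a directed
union of convex sets is interior to one of them, because a simplex around it has finitely many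
vertices. Epi-pointedness supplies the nonempty interiors, and projecting onto the first factor
gives the statement for the domains.
-/

section VerticalSeparation

variable {E : Type*} [NormedAddCommGroup E]

def IsVerticallyUpward (C : Set (E × ℝ)) : Prop :=
  ∀ r : ℝ, 0 ≤ r → ((0 : E), r) +ᵥ C ⊆ C

theorem IsVerticallyUpward.closure {C : Set (E × ℝ)} (hC : IsVerticallyUpward C) :
    IsVerticallyUpward (closure C) := fun r hr => by
  rw [← closure_vadd]
  exact closure_mono (hC r hr)

theorem IsVerticallyUpward.iUnion {ι : Sort*} {C : ι → Set (E × ℝ)}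
    (hC : ∀ i, IsVerticallyUpward (C i)) : IsVerticallyUpward (⋃ i, C i) := fun r hr => by
  rw [vadd_set_iUnion]
  exact iUnion_mono fun i => hC i r hr

variable [InnerProductSpace ℝ E]

theorem IsVerticallyUpward.convexHull {C : Set (E × ℝ)} (hC : IsVerticallyUpward C) :
    IsVerticallyUpward (convexHull ℝ C) := fun r hr => by
  rw [← convexHull_vadd]
  exact convexHull_mono (hC r hr)

noncomputable def innerFstSubSnd (w : E) : E × ℝ →L[ℝ] ℝ :=
  (innerSL ℝ w).comp (ContinuousLinearMap.fst ℝ E ℝ) - ContinuousLinearMap.snd ℝ E ℝ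

@[simp]
theorem innerFstSubSnd_apply (w : E) (q : E × ℝ) : innerFstSubSnd w q = ⟪w, q.1⟫ - q.2 := rfl

theorem map_vertical_vadd (φ : E × ℝ →L[ℝ] ℝ) (q : E × ℝ) (r : ℝ) :
    φ (((0 : E), r) +ᵥ q) = φ q + r * φ (0, 1) := by
  have : ((0 : E), r) = r • ((0 : E), (1 : ℝ)) := by simp
  rw [vadd_eq_add, map_add, this, map_smul, smul_eq_mul, add_comm]

theorem IsVerticallyUpward.apply_zero_one_nonpos {C : Set (E × ℝ)} (hC : IsVerticallyUpward C)
    {q : E × ℝ} (hq : q ∈ C) {φ : E × ℝ →L[ℝ] ℝ} {u : ℝ} (hφ : ∀ a ∈ C, φ a < u) :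
    φ (0, 1) ≤ 0 := by
  by_contra! hpos
  have hr : 0 ≤ (u - φ q) / φ (0, 1) := div_nonneg (sub_nonneg.2 (hφ q hq).le) hpos.le
  have := hφ _ (hC _ hr (vadd_mem_vadd_set hq))
  rw [map_vertical_vadd, div_mul_cancel₀ _ hpos.ne'] at this
  linarith

theorem exists_eq_innerFstSubSnd_mul [CompleteSpace E] (ψ : E × ℝ →L[ℝ] ℝ) (hψ : ψ (0, 1) < 0) :
    ∃ w : E, ∀ q, ψ q = innerFstSubSnd w q * -ψ (0, 1) := by
  set a := (InnerProductSpace.toDual ℝ E).symm (ψ.comp (ContinuousLinearMap.inl ℝ E ℝ))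
  refine ⟨(-ψ (0, 1))⁻¹ • a, fun q => ?_⟩
  have hq : ψ q = ψ (q.1, 0) + q.2 * ψ (0, 1) := by
    rw [← map_vertical_vadd]
    congr 1
    ext <;> simp
  rw [hq, innerFstSubSnd_apply, real_inner_smul_left,
    InnerProductSpace.toDual_symm_apply]
  simp only [ContinuousLinearMap.comp_apply, ContinuousLinearMap.inl_apply]
  field_simp [hψ.ne]
  ring

theorem exists_innerFstSubSnd_le_lt_of_notMem [CompleteSpace E] {C : Set (E × ℝ)}
    (hconv : Convex ℝ C) (hclosed : IsClosed C) (hup : IsVerticallyUpward C) {y₀ : E} {β : ℝ}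
    (hmin : ∀ q ∈ C, innerFstSubSnd y₀ q ≤ β) {p : E × ℝ} (hp : p ∉ C) :
    ∃ (w : E) (γ : ℝ), (∀ q ∈ C, innerFstSubSnd w q ≤ γ) ∧ γ < innerFstSubSnd w p := by
  rcases C.eq_empty_or_nonempty with rfl | ⟨q₀, hq₀⟩
  · exact ⟨0, -p.2 - 1, by simp, by simp⟩
  obtain ⟨φ, u, hφC, hφp⟩ := geometric_hahn_banach_closed_point hconv hclosed hp
  have hslope := hup.apply_zero_one_nonpos hq₀ hφC
  -- tilting `φ` by a small multiple of `innerFstSubSnd y₀` makes its vertical slope negative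
  set c := innerFstSubSnd y₀ p - β
  set ε := (φ p - u) / (|c| + 1)
  have hε : 0 < ε := div_pos (sub_pos.2 hφp) (by positivity)
  have hεc : u - φ p < ε * c := by
    have : ε * (|c| + 1) = φ p - u := div_mul_cancel₀ _ (by positivity)
    nlinarith [neg_abs_le c]
  set ψ := φ + ε • innerFstSubSnd y₀
  have hψ : ∀ q, ψ q = φ q + ε * innerFstSubSnd y₀ q := fun q => rfl
  have hψ01 : ψ (0, 1) < 0 := by
    rw [hψ, innerFstSubSnd_apply, inner_zero_right]
    linarith
  obtain ⟨w, hw⟩ := exists_eq_innerFstSubSnd_mul ψ hψ01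
  have hσ : 0 < -ψ (0, 1) := neg_pos.2 hψ01
  refine ⟨w, (u + ε * β) / -ψ (0, 1), fun q hq => ?_, ?_⟩
  · rw [le_div_iff₀ hσ, ← hw, hψ]
    linarith [hφC q hq, mul_le_mul_of_nonneg_left (hmin q hq) hε.le]
  · rw [div_lt_iff₀ hσ, ← hw, hψ]
    linarith [mul_sub ε (innerFstSubSnd y₀ p) β]

end VerticalSeparation

section FiniteDimensional

variable {V : Type*} [NormedAddCommGroup V] [NormedSpace ℝ V] [FiniteDimensional ℝ V]

theorem interior_iUnion_subset_of_directed {ι : Sort*} {C : ι → Set V}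
    (hC : ∀ i, Convex ℝ (C i)) (hdir : Directed (· ⊆ ·) C) :
    interior (⋃ i, C i) ⊆ ⋃ i, interior (C i) := by
  intro x hx
  obtain ⟨b, hxb, hb⟩ := exists_mem_interior_convexHull_affineBasis (mem_interior_iff_mem_nhds.1 hx)
  choose idx hidx using fun j => mem_iUnion.1 (hb (subset_convexHull ℝ _ (mem_range_self j)))
  have : Nonempty ι := ⟨idx 0⟩
  obtain ⟨k, hk⟩ := hdir.finite_le idx
  exact mem_iUnion.2 ⟨k, interior_mono
    (convexHull_min (range_subset_iff.2 fun j => hk j (hidx j)) (hC k)) hxb⟩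

theorem interior_subset_iUnion_interior_of_subset_closure {ι : Sort*} {C : ι → Set V}
    (hC : ∀ i, Convex ℝ (C i)) (hdir : Directed (· ⊆ ·) C) (hne : ∃ i, (interior (C i)).Nonempty)
    {s : Set V} (hs : s ⊆ closure (⋃ i, C i)) : interior s ⊆ ⋃ i, interior (C i) := by
  obtain ⟨i, hi⟩ := hne
  calc interior s ⊆ interior (closure (⋃ i, C i)) := interior_mono hs
    _ = interior (⋃ i, C i) := (hdir.convex_iUnion fun {i} => hC i)
          |>.interior_closure_eq_interior_of_nonempty_interior
            (hi.mono (interior_mono (subset_iUnion C i)))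
    _ ⊆ ⋃ i, interior (C i) := interior_iUnion_subset_of_directed hC hdir

end FiniteDimensional

section Conjugate

variable {n : ℕ}

theorem antitone_conjF : Antitone (conjF (n := n)) := fun _ _ h _ =>
  iSup_mono fun x => EReal.sub_le_sub le_rfl (h x)

theorem antitone_epiS : Antitone (epiS (n := n)) := fun _ _ h _ hp => (h _).trans hp

theorem antitone_dm : Antitone (dm (n := n)) := fun _ _ h _ hx => (h _).trans_lt hx

theorem isVerticallyUpward_epiS (g : En n → EReal) : IsVerticallyUpward (epiS g) := by
  rintro r hr _ ⟨p, hp, rfl⟩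
  show g (0 + p.1) ≤ ((r + p.2 : ℝ) : EReal)
  rw [zero_add]
  exact hp.trans (EReal.coe_le_coe_iff.2 (by linarith))

theorem dm_eq_image_fst_epiS (g : En n → EReal) : dm g = Prod.fst '' epiS g := by
  ext x
  refine ⟨fun hx => ⟨(x, (g x).toReal), EReal.le_coe_toReal hx.ne, rfl⟩, ?_⟩
  rintro ⟨p, hp, rfl⟩
  exact hp.trans_lt (EReal.coe_lt_top _)

theorem convex_dm_of_convex_epiS {g : En n → EReal} (hg : Convex ℝ (epiS g)) :
    Convex ℝ (dm g) := by
  rw [dm_eq_image_fst_epiS]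
  exact hg.linear_image (LinearMap.fst ℝ _ _)

theorem dm_subset_closure_iUnion_of_epiS_subset {ι : Sort*} {g : En n → EReal}
    {h : ι → En n → EReal} (hgh : epiS g ⊆ closure (⋃ i, epiS (h i))) :
    dm g ⊆ closure (⋃ i, dm (h i)) := by
  simp_rw [dm_eq_image_fst_epiS, ← image_iUnion]
  exact (image_mono hgh).trans (image_closure_subset_closure_image continuous_fst)

theorem conjF_le_coe_iff (g : En n → EReal) (y : En n) (r : ℝ) :
    conjF g y ≤ r ↔ ∀ q ∈ epiS g, innerFstSubSnd y q ≤ r := by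
  refine ⟨fun h q hq => ?_, fun h => iSup_le fun x => ?_⟩
  · have : ((innerFstSubSnd y q : ℝ) : EReal) ≤ conjF g y :=
      le_iSup_of_le q.1 <| by
        rw [innerFstSubSnd_apply, EReal.coe_sub]
        exact EReal.sub_le_sub le_rfl hq
    exact EReal.coe_le_coe_iff.1 (this.trans h)
  · induction hgx : g x using EReal.rec with
    | bot =>
      have := h (x, ⟪y, x⟫ - r - 1) (by simp [epiS, hgx])
      rw [innerFstSubSnd_apply] at this
      linarith
    | coe s =>
      have := h (x, s) hgx.le
      rw [← EReal.coe_sub]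
      exact_mod_cast this
    | top => simp

theorem epiS_conjF_eq_iInter (g : En n → EReal) :
    epiS (conjF g) = ⋂ q ∈ epiS g, {p | innerFstSubSnd q.1 p ≤ q.2} := by
  ext p
  simp only [mem_iInter]
  refine (conjF_le_coe_iff g p.1 p.2).trans (forall₂_congr fun q _ => ?_)
  change _ ↔ innerFstSubSnd q.1 p ≤ q.2
  rw [innerFstSubSnd_apply, innerFstSubSnd_apply, real_inner_comm, sub_le_comm]

theorem convex_epiS_conjF (g : En n → EReal) : Convex ℝ (epiS (conjF g)) := by
  rw [epiS_conjF_eq_iInter]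
  exact convex_iInter₂ fun q _ => convex_halfSpace_le (innerFstSubSnd q.1).isLinear q.2

theorem isClosed_epiS_conjF (g : En n → EReal) : IsClosed (epiS (conjF g)) := by
  rw [epiS_conjF_eq_iInter]
  exact isClosed_biInter fun q _ => isClosed_le (innerFstSubSnd q.1).continuous continuous_const

theorem dm_nonempty_of_bot_lt_conjF {g : En n → EReal} {y : En n} (h : ⊥ < conjF g y) :
    (dm g).Nonempty := by
  obtain ⟨x, hx⟩ := lt_iSup_iff.1 h
  refine ⟨x, show g x < ⊤ from lt_top_iff_ne_top.2 fun hgx => ?_⟩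
  rw [hgx, EReal.sub_top] at hx
  exact lt_irrefl _ hx

theorem interior_epiS_nonempty {g : En n → EReal} (hg : Convex ℝ (epiS g))
    (hdm : (interior (dm g)).Nonempty) : (interior (epiS g)).Nonempty := by
  obtain ⟨y₀, hy₀⟩ := hdm
  obtain ⟨b, hb, hbdm⟩ :=
    exists_mem_interior_convexHull_affineBasis (mem_interior_iff_mem_nhds.1 hy₀)
  set M := Finset.univ.sup' Finset.univ_nonempty fun i => (g (b i)).toReal
  have hslice : Convex ℝ {x | (x, M) ∈ epiS g} := fun x hx x' hx' a a' ha ha' haa' => by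
    simpa [← add_mul, haa'] using hg hx hx' ha ha' haa'
  have hhull : convexHull ℝ (range b) ⊆ {x | (x, M) ∈ epiS g} :=
    convexHull_min (range_subset_iff.2 fun i =>
      (EReal.le_coe_toReal (hbdm (subset_convexHull ℝ _ (mem_range_self i))).ne).trans <|
        EReal.coe_le_coe_iff.2 <| Finset.le_sup' (fun i => (g (b i)).toReal) (Finset.mem_univ i))
      hslice
  have hbox : interior (convexHull ℝ (range b)) ×ˢ Ioi M ⊆ epiS g := fun q ⟨hx, hr⟩ =>
    (hhull (interior_subset hx)).trans (EReal.coe_le_coe_iff.2 (le_of_lt hr))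
  exact ⟨(y₀, M + 1), interior_maximal hbox (isOpen_interior.prod isOpen_Ioi) ⟨hb, by simp⟩⟩

theorem epiS_conjF_iSup_subset_closure_convexHull {ι : Sort*} (f : ι → En n → EReal)
    (hdm : (dm fun x => ⨆ i, f i x).Nonempty)
    (hbiconj : ∀ y, conjF (conjF fun x => ⨆ i, f i x) y = ⨆ i, conjF (conjF (f i)) y) :
    epiS (conjF fun x => ⨆ i, f i x) ⊆ closure (convexHull ℝ (⋃ i, epiS (conjF (f i)))) := by
  set F := fun x => ⨆ i, f i x
  set C := closure (convexHull ℝ (⋃ i, epiS (conjF (f i))))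
  have hU : ⋃ i, epiS (conjF (f i)) ⊆ epiS (conjF F) :=
    iUnion_subset fun i => antitone_epiS (antitone_conjF fun x => le_iSup (f · x) i)
  have hCF : C ⊆ epiS (conjF F) :=
    closure_minimal (convexHull_min hU (convex_epiS_conjF F)) (isClosed_epiS_conjF F)
  obtain ⟨x₀, hx₀⟩ := hdm
  have hmin : ∀ q ∈ C, innerFstSubSnd x₀ q ≤ (F x₀).toReal := fun q hq => by
    have := (conjF_le_coe_iff F q.1 q.2).1 (hCF hq) (x₀, (F x₀).toReal)
      (EReal.le_coe_toReal hx₀.ne)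
    simp only [innerFstSubSnd_apply] at this ⊢
    rw [real_inner_comm]
    linarith
  intro p hp
  by_contra hpC
  have hCup : IsVerticallyUpward C :=
    (IsVerticallyUpward.iUnion fun i => isVerticallyUpward_epiS _).convexHull.closure
  obtain ⟨w, γ, hwC, hwp⟩ := exists_innerFstSubSnd_le_lt_of_notMem
    (convex_convexHull ℝ _).closure isClosed_closure hCup hmin hpC
  have hle : conjF (conjF F) w ≤ γ := by
    rw [hbiconj]
    exact iSup_le fun i => (conjF_le_coe_iff _ _ _).2 fun q hq =>
      hwC q (subset_closure (subset_convexHull ℝ _ (mem_iUnion_of_mem i hq)))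
  exact hwp.not_ge ((conjF_le_coe_iff _ _ _).1 hle p hp)

end Conjugate

/-- For every `t`, `dom f_t* ⊆ dom f*` and
`int (dom f_t*) ⊆ int (dom f*)`.  If moreover `f*` is proper,
`f** = sup_t f_t**`, and the family is increasing (over a directed set) and
consists of epi-pointed functions, then `⋃_t int (dom f_t*) = int (dom f*)` and
`⋃_t int (epi f_t*) = int (epi f*)`. -/
theorem statement5 {n : ℕ} {T : Type*} [Preorder T] (f : T → En n → EReal) :
    (∀ t, dm (conjF (f t)) ⊆ dm (conjF (fun x => ⨆ s, f s x)) ∧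
        interior (dm (conjF (f t))) ⊆ interior (dm (conjF (fun x => ⨆ s, f s x)))) ∧
    ((∀ a b : T, ∃ c, a ≤ c ∧ b ≤ c) →
      (∀ ⦃s t : T⦄, s ≤ t → ∀ x, f s x ≤ f t x) →
      (∀ t, EpiPointed (f t)) →
      ProperF (conjF (fun x => ⨆ s, f s x)) →
      (∀ x, conjF (conjF (fun x => ⨆ s, f s x)) x = ⨆ t, conjF (conjF (f t)) x) →
      (⋃ t, interior (dm (conjF (f t)))) = interior (dm (conjF (fun x => ⨆ s, f s x))) ∧
      (⋃ t, interior (epiS (conjF (f t)))) = interior (epiS (conjF (fun x => ⨆ s, f s x)))) := by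
  have hconj : ∀ t, conjF (fun x => ⨆ s, f s x) ≤ conjF (f t) :=
    fun t => antitone_conjF fun x => le_iSup (f · x) t
  refine ⟨fun t => ⟨antitone_dm (hconj t), interior_mono (antitone_dm (hconj t))⟩, ?_⟩
  intro hdir hmono hep hproper hbiconj
  have : IsDirectedOrder T := ⟨hdir⟩
  obtain ⟨t₀⟩ : Nonempty T := by
    by_contra hT
    obtain ⟨y, hy⟩ := hproper.1
    simp [not_nonempty_iff.1 hT, conjF] at hy
  have hconj_anti : Antitone fun t => conjF (f t) :=
    antitone_conjF.comp_monotone fun s t h => hmono h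
  have hepi_dir : Directed (· ⊆ ·) fun t => epiS (conjF (f t)) :=
    (antitone_epiS.comp hconj_anti).directed_le
  have hdm_dir : Directed (· ⊆ ·) fun t => dm (conjF (f t)) :=
    (antitone_dm.comp hconj_anti).directed_le
  have hepi := epiS_conjF_iSup_subset_closure_convexHull f
    (dm_nonempty_of_bot_lt_conjF (hproper.2 0)) hbiconj
  rw [(hepi_dir.convex_iUnion fun {t} => convex_epiS_conjF (f t)).convexHull_eq] at hepi
  refine ⟨(iUnion_subset fun t => interior_mono (antitone_dm (hconj t))).antisymm ?_,
    (iUnion_subset fun t => interior_mono (antitone_epiS (hconj t))).antisymm ?_⟩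
  · exact interior_subset_iUnion_interior_of_subset_closure
      (fun t => convex_dm_of_convex_epiS (convex_epiS_conjF _)) hdm_dir ⟨t₀, (hep t₀).2⟩
      (dm_subset_closure_iUnion_of_epiS_subset hepi)
  · exact interior_subset_iUnion_interior_of_subset_closure (fun t => convex_epiS_conjF _)
      hepi_dir ⟨t₀, interior_epiS_nonempty (convex_epiS_conjF _) (hep t₀).2⟩ hepi
end

section
/- Let {f_t : t ∈ T} be a family of functions on ℝⁿ with pointwise supremum f, such that f** = sup_{t∈T} f_t**, and let x ∈ ℝⁿ. If ε > inf_{y∈ℝⁿ} ( f*(y) + f(x) − ⟨y,x⟩ ), then ∂_ε f(x) = cl{ Σ_{t∈supp λ} λ_t y_t : λ ∈ Δ(T), η_t ≥ 0, y_t ∈ ∂_{η_t} f_t(x) for t ∈ supp λ, Σ_t λ_t η_t ∈ [0,ε), and Σ_t λ_t f_t(x) > f(x) + Σ_t λ_t η_t − ε }. Consequently, for every ε ≥ 0, ∂_ε f(x) = ∩_{γ>ε} cl{ Σ_{t∈supp λ} λ_t y_t : λ ∈ Δ(T), η_t ≥ 0, y_t ∈ ∂_{η_t} f_t(x) for t ∈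 supp λ, Σ_t λ_t η_t ∈ [0,γ), and Σ_t λ_t f_t(x) ≥ f(x) + Σ_t λ_t η_t − γ }. Moreover, in both formulas it suffices to consider λ ∈ Δ(T) with #supp λ ≤ min{n+1, #T}. -/
open scoped RealInnerProductSpace Pointwise
open Set Filter

/-- The set of convex combinations `Σ_{t ∈ supp λ} λ_t y_t` with `λ ∈ Δ(T)`,
`η_t ≥ 0`, `y_t ∈ ∂_{η_t} f_t(x)` for `t ∈ supp λ`, `Σ λ_t η_t ∈ [0, γ)` and
`Σ λ_t f_t(x) > (resp. ≥) f(x) + Σ λ_t η_t − γ`; when `restricted = true` the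
support of `λ` is required to have at most `min (n+1) (#T)` elements. -/
def Dset {n : ℕ} {T : Type*} (f : T → En n → EReal) (x : En n) (γ : ℝ)
    (strict : Bool) (restricted : Bool) : Set (En n) :=
  {v | ∃ (l : T →₀ ℝ) (η : T → ℝ) (ys : T → En n),
    inSimplex l ∧
    (restricted = true → (l.support.card : ℕ∞) ≤ min ((n : ℕ∞) + 1) (ENat.card T)) ∧
    (∀ t, 0 ≤ η t) ∧
    (∀ t ∈ l.support, ys t ∈ eSub (f t) (η t) x) ∧
    (0 ≤ ∑ t ∈ l.support, l t * η t) ∧ (∑ t ∈ l.support, l t * η t) < γ ∧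
    (if strict = true then
       (⨆ s, f s x) + (((∑ t ∈ l.support, l t * η t) - γ : ℝ) : EReal) <
         ∑ t ∈ l.support, (l t : EReal) * f t x
     else
       (⨆ s, f s x) + (((∑ t ∈ l.support, l t * η t) - γ : ℝ) : EReal) ≤
         ∑ t ∈ l.support, (l t : EReal) * f t x) ∧
    v = ∑ t ∈ l.support, l t • ys t}

/-!
`⊇`: a convex combination of `η_t`-subgradients of the `f_t` is an `ε`-subgradient of `f`
whenever the weighted errors and the gap `f(x) - Σ λ_t f_t(x)` add up to at most `ε`, and
`∂_ε f(x)` is closed.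

`⊆`: put `H = inf_t f_t*`. The hypothesis `f** = sup_t f_t**` says `H* = f**`, so `H** = f*`.
If `f*(y) < ⟪y, x⟫ - f(x) + ε`, then by separation `(y, c)` lies in the closed convex hull of
`epi H` for some `c < ⟪y, x⟫ - f(x) + ε`, hence is approximated by convex combinations of points
`(z_i, s_i)` with `f_{t_i}*(z_i) < s_i + θ`. Each `z_i` is then an `η_i`-subgradient of
`f_{t_i}` at `x`, and Carathéodory's reduction keeps at most `n + 1` of them without increasing
the total error. By convexity of `f*` such `y` are dense in `∂_ε f(x)` as soon as one exists,
which is what `ε > inf_y (f*(y) + f(x) - ⟪y, x⟫)` provides. The second formula follows from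
`∂_ε f(x) = ⋂_{γ > ε} ∂_γ f(x)`, since `y ∈ ∂_ε f(x)` forces that infimum to be at most `ε`.
-/

namespace EReal

lemma coe_sub_le_comm {a : ℝ} {b c : EReal} : (a : EReal) - b ≤ c ↔ (a : EReal) - c ≤ b := by
  suffices h : ∀ b c : EReal, (a : EReal) - b ≤ c → (a : EReal) - c ≤ b from ⟨h b c, h c b⟩
  intro b c h
  induction b using EReal.rec <;> induction c using EReal.rec
  all_goals first
    | (rw [← EReal.coe_sub] at h ⊢; norm_cast at h ⊢; linarith)
    | (rw [← EReal.coe_sub] at h; exact absurd (le_bot_iff.mp h) (EReal.coe_ne_bot _))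
    | simp at h ⊢

lemma add_coe_sub_coe_le_iff {e : EReal} {r a c : ℝ} :
    e + r - a ≤ c ↔ e ≤ ((a - r + c : ℝ) : EReal) := by
  induction e using EReal.rec
  · simp
  · norm_cast; constructor <;> intro <;> linarith
  · simp only [top_add_coe, top_sub_coe, top_le_iff, coe_ne_top]

lemma add_coe_sub_coe_lt_iff {e : EReal} {r a c : ℝ} :
    e + r - a < c ↔ e < ((a - r + c : ℝ) : EReal) := by
  induction e using EReal.rec
  · simp only [bot_add, bot_sub, bot_lt_coe]
  · norm_cast; constructor <;> intro <;> linarith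
  · simp only [top_add_coe, top_sub_coe, not_top_lt]

lemma coe_combo_le {u v : ℝ} {e : EReal} {s : ℝ} (hs₀ : 0 ≤ s) (hs₁ : s ≤ 1)
    (hu : (u : EReal) ≤ e) (hv : (v : EReal) ≤ e) : (((1 - s) * u + s * v : ℝ) : EReal) ≤ e := by
  refine le_trans (EReal.coe_le_coe_iff.mpr ?_) (max_le hu hv : ((max u v : ℝ) : EReal) ≤ e)
  nlinarith [le_max_left u v, le_max_right u v]

lemma coe_sum_mul {ι : Type*} {s : Finset ι} {w ρ : ι → ℝ} {g : ι → EReal}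
    (hg : ∀ i ∈ s, g i = ρ i) :
    ∑ i ∈ s, (w i : EReal) * g i = ((∑ i ∈ s, w i * ρ i : ℝ) : EReal) := by
  have hcoe : ((∑ i ∈ s, w i * ρ i : ℝ) : EReal) = ∑ i ∈ s, ((w i * ρ i : ℝ) : EReal) :=
    map_sum (⟨⟨Real.toEReal, coe_zero⟩, coe_add⟩ : ℝ →+ EReal) _ _
  rw [hcoe]
  exact Finset.sum_congr rfl fun i hi => by rw [hg i hi, EReal.coe_mul]

end EReal

section Conjugate

variable {n : ℕ}

lemma inner_sub_le_conjF (g : En n → EReal) (y z : En n) :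
    (⟪y, z⟫ : EReal) - g z ≤ conjF g y :=
  le_iSup (fun w => (⟪y, w⟫ : EReal) - g w) z

lemma conjF_le_iff {g : En n → EReal} {y : En n} {d : ℝ} :
    conjF g y ≤ d ↔ ∀ z, ((⟪y, z⟫ - d : ℝ) : EReal) ≤ g z := by
  simp only [conjF, iSup_le_iff, EReal.coe_sub, EReal.coe_sub_le_comm]

lemma mem_eSub_iff {g : En n → EReal} {ε : ℝ} {x y : En n} :
    y ∈ eSub g ε x ↔ ∃ r : ℝ, g x = r ∧ conjF g y ≤ ((⟪y, x⟫ - r + ε : ℝ) : EReal) := by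
  refine exists_congr fun r => and_congr_right fun _ => ?_
  rw [conjF_le_iff]
  refine forall_congr' fun z => ?_
  rw [inner_sub_right]
  ring_nf

lemma conjF_conjF_le (g : En n → EReal) (w : En n) : conjF (conjF g) w ≤ g w :=
  iSup_le fun y => EReal.coe_sub_le_comm.mp (by
    simpa only [real_inner_comm] using inner_sub_le_conjF g y w)

lemma conjF_anti {g h : En n → EReal} (hgh : ∀ z, g z ≤ h z) (y : En n) :
    conjF h y ≤ conjF g y :=
  iSup_mono fun z => EReal.sub_le_sub le_rfl (hgh z)

lemma conjF_conjF_conjF (g : En n → EReal) (y : En n) :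
    conjF (conjF (conjF g)) y = conjF g y :=
  le_antisymm (conjF_conjF_le (conjF g) y) (conjF_anti (conjF_conjF_le g) y)

lemma conjF_iInf {T : Sort*} (h : T → En n → EReal) (y : En n) :
    conjF (fun p => ⨅ t, h t p) y = ⨆ t, conjF (h t) y := by
  have hsub : ∀ p, (⟪y, p⟫ : EReal) - ⨅ t, h t p = ⨆ t, ((⟪y, p⟫ : EReal) - h t p) := fun p =>
    le_antisymm (EReal.coe_sub_le_comm.mp (le_iInf fun t => EReal.coe_sub_le_comm.mp
        (le_iSup (fun t => (⟪y, p⟫ : EReal) - h t p) t)))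
      (iSup_le fun t => EReal.sub_le_sub le_rfl (iInf_le _ t))
  simp only [conjF, hsub]
  exact iSup_comm

lemma le_conjF_conjF_of_forall_le {H : En n → EReal} {v : En n} {d : ℝ}
    (hH : ∀ p, ((⟪v, p⟫ - d : ℝ) : EReal) ≤ H p) (y : En n) :
    ((⟪y, v⟫ - d : ℝ) : EReal) ≤ conjF (conjF H) y := by
  refine le_trans ?_ (inner_sub_le_conjF (conjF H) y v)
  rw [EReal.coe_sub]
  exact EReal.sub_le_sub le_rfl (conjF_le_iff.mpr hH)

lemma conjF_combo_le {g : En n → EReal} {a b : En n} {A B s : ℝ}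
    (ha : conjF g a ≤ A) (hb : conjF g b ≤ B) (hs₀ : 0 ≤ s) (hs₁ : s ≤ 1) :
    conjF g ((1 - s) • a + s • b) ≤ (((1 - s) * A + s * B : ℝ) : EReal) := by
  refine conjF_le_iff.mpr fun z => ?_
  have key : ⟪(1 - s) • a + s • b, z⟫ - ((1 - s) * A + s * B)
      = (1 - s) * (⟪a, z⟫ - A) + s * (⟪b, z⟫ - B) := by
    rw [inner_add_left, real_inner_smul_left, real_inner_smul_left]; ring
  rw [key]
  exact EReal.coe_combo_le hs₀ hs₁ (conjF_le_iff.mp ha z) (conjF_le_iff.mp hb z)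

end Conjugate

section EpsSubdifferential

variable {n : ℕ}

lemma nonneg_of_mem_eSub {g : En n → EReal} {ε : ℝ} {x y : En n} (hy : y ∈ eSub g ε x) :
    0 ≤ ε := by
  obtain ⟨r, hr, h⟩ := hy
  have := h x
  rw [hr, sub_self, inner_zero_right, EReal.coe_le_coe_iff] at this
  linarith

lemma eSub_mono {g : En n → EReal} {ε ε' : ℝ} (h : ε ≤ ε') (x : En n) :
    eSub g ε x ⊆ eSub g ε' x := by
  rintro y ⟨r, hr, hy⟩
  exact ⟨r, hr, fun z => le_trans (EReal.coe_le_coe_iff.mpr (by linarith)) (hy z)⟩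

lemma isClosed_eSub (g : En n → EReal) (ε : ℝ) (x : En n) : IsClosed (eSub g ε x) := by
  by_cases hx : ∃ r : ℝ, g x = r
  · obtain ⟨r, hr⟩ := hx
    have heq : eSub g ε x = ⋂ z, {y | ((⟪y, z - x⟫ + r - ε : ℝ) : EReal) ≤ g z} := by
      ext y
      simp only [eSub, mem_iInter, mem_ofPred_eq]
      refine ⟨fun ⟨r', hr', h⟩ => ?_, fun h => ⟨r, hr, h⟩⟩
      obtain rfl : r' = r := by rw [hr] at hr'; exact_mod_cast hr'.symm
      exact h
    rw [heq]
    exact isClosed_iInter fun z =>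
      isClosed_le (continuous_coe_real_ereal.comp (by fun_prop)) continuous_const
  · convert isClosed_empty
    exact eq_empty_of_forall_notMem fun y ⟨r, hr, _⟩ => hx ⟨r, hr⟩

lemma mem_eSub_of_forall_lt {g : En n → EReal} {ε : ℝ} {x y : En n}
    (h : ∀ γ : ℝ, ε < γ → y ∈ eSub g γ x) : y ∈ eSub g ε x := by
  obtain ⟨r, hr, -⟩ := h (ε + 1) (by linarith)
  refine ⟨r, hr, fun z => le_of_forall_lt_imp_le_of_dense fun e he => ?_⟩
  induction e using EReal.rec
  · exact bot_le
  · rename_i e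
    obtain ⟨r', hr', hγ⟩ := h (⟪y, z - x⟫ + r - e) (by rw [EReal.coe_lt_coe_iff] at he; linarith)
    obtain rfl : r' = r := by rw [hr] at hr'; exact_mod_cast hr'.symm
    exact le_of_eq_of_le (by ring_nf) (hγ z)
  · exact absurd he (not_lt.mpr le_top)

lemma exists_mem_eSub_of_conjF_lt {g : En n → EReal} {x z : En n} {a : ℝ}
    (hz : conjF g z < a) (hx : g x ≠ ⊤) :
    ∃ ρ : ℝ, g x = ρ ∧ z ∈ eSub g (a + ρ - ⟪z, x⟫) x := by
  have hx' : g x ≠ ⊥ := fun hbot => by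
    have := (inner_sub_le_conjF g z x).trans_lt hz
    rw [hbot, EReal.coe_sub_bot] at this
    exact not_top_lt this
  have hρ := (EReal.coe_toReal hx hx').symm
  exact ⟨_, hρ, mem_eSub_iff.mpr ⟨_, hρ, hz.le.trans_eq (by ring_nf)⟩⟩

end EpsSubdifferential

section ConvexCombination

variable {n : ℕ} {ι : Type*} {I : Finset ι} {w η : ι → ℝ} {p : ι → En n} {x : En n}

lemma inner_sum_smul_le_biSup_of_mem_eSub {ρ : ι → ℝ} {g : ι → En n → EReal}
    (hw₀ : ∀ i ∈ I, 0 ≤ w i) (hw₁ : ∑ i ∈ I, w i = 1) (hρ : ∀ i ∈ I, g i x = ρ i)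
    (hp : ∀ i ∈ I, p i ∈ eSub (g i) (η i) x) (z : En n) :
    ((⟪∑ i ∈ I, w i • p i, z - x⟫ + ∑ i ∈ I, w i * ρ i - ∑ i ∈ I, w i * η i : ℝ) : EReal)
      ≤ ⨆ i ∈ I, g i z := by
  have hI : I.Nonempty := Finset.nonempty_of_sum_ne_zero (by rw [hw₁]; exact one_ne_zero)
  set a : ι → ℝ := fun i => ⟪p i, z - x⟫ + ρ i - η i
  have ha : ∀ i ∈ I, (a i : EReal) ≤ g i z := by
    intro i hi
    obtain ⟨r, hr, h⟩ := hp i hi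
    obtain rfl : r = ρ i := by rw [hρ i hi] at hr; exact_mod_cast hr.symm
    exact h z
  obtain ⟨j, hj, hmax⟩ := Finset.exists_max_image I a hI
  have hsum : ⟪∑ i ∈ I, w i • p i, z - x⟫ + ∑ i ∈ I, w i * ρ i - ∑ i ∈ I, w i * η i
      = ∑ i ∈ I, w i * a i := by
    simp only [a, sum_inner, real_inner_smul_left, mul_add, mul_sub, Finset.sum_add_distrib,
      Finset.sum_sub_distrib]
  calc ((⟪∑ i ∈ I, w i • p i, z - x⟫ + ∑ i ∈ I, w i * ρ i - ∑ i ∈ I, w i * η i : ℝ) : EReal)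
      ≤ ((∑ i ∈ I, w i * a j : ℝ) : EReal) := by
        rw [hsum, EReal.coe_le_coe_iff]
        exact Finset.sum_le_sum fun i hi => mul_le_mul_of_nonneg_left (hmax i hi) (hw₀ i hi)
    _ = a j := by rw [← Finset.sum_mul, hw₁, one_mul]
    _ ≤ g j z := ha j hj
    _ ≤ ⨆ i ∈ I, g i z := le_iSup₂_of_le j hj le_rfl

lemma sum_smul_mem_eSub {g : En n → EReal} (hw₀ : ∀ i ∈ I, 0 ≤ w i) (hw₁ : ∑ i ∈ I, w i = 1)
    (hp : ∀ i ∈ I, p i ∈ eSub g (η i) x) :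
    ∑ i ∈ I, w i • p i ∈ eSub g (∑ i ∈ I, w i * η i) x := by
  obtain ⟨i₀, hi₀⟩ := Finset.nonempty_of_sum_ne_zero (by rw [hw₁]; exact one_ne_zero)
  obtain ⟨r, hr, -⟩ := hp i₀ hi₀
  refine ⟨r, hr, fun z => ?_⟩
  have h := inner_sum_smul_le_biSup_of_mem_eSub (ρ := fun _ => r) (g := fun _ => g)
    hw₀ hw₁ (fun _ _ => hr) hp z
  rw [← Finset.sum_mul, hw₁, one_mul] at h
  exact h.trans (iSup₂_le fun _ _ => le_rfl)

end ConvexCombination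

lemma Dset_subset_eSub {n : ℕ} {T : Type*} (f : T → En n → EReal) (x : En n) (γ : ℝ)
    (strict restricted : Bool) :
    Dset f x γ strict restricted ⊆ eSub (fun w => ⨆ t, f t w) γ x := by
  rintro v ⟨l, η, ys, ⟨hl, hl₁⟩, -, -, hys, -, -, hcond, rfl⟩
  have hcond' : (⨆ s, f s x) + ((∑ t ∈ l.support, l t * η t - γ : ℝ) : EReal)
      ≤ ∑ t ∈ l.support, (l t : EReal) * f t x := by
    cases strict
    exacts [hcond, hcond.le]
  have hρ : ∀ t ∈ l.support, f t x = (f t x).toReal := fun t ht => by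
    obtain ⟨r, hr, -⟩ := hys t ht
    rw [hr, EReal.toReal_coe]
  rw [EReal.coe_sum_mul hρ] at hcond'
  obtain ⟨t₀, ht₀⟩ := Finset.nonempty_of_sum_ne_zero (by rw [hl₁]; exact one_ne_zero)
  have hbot : f t₀ x ≤ ⨆ s, f s x := le_iSup (fun s => f s x) t₀
  generalize hS : (⨆ s, f s x) = S at hcond' hbot
  induction S using EReal.rec
  · rw [hρ t₀ ht₀, le_bot_iff] at hbot
    exact absurd hbot (EReal.coe_ne_bot _)
  · rename_i R
    refine ⟨R, hS, fun z => le_trans ?_ ((inner_sum_smul_le_biSup_of_mem_eSub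
      (fun t _ => (hl t).1) hl₁ hρ hys z).trans (iSup₂_le fun t _ => le_iSup (fun s => f s z) t))⟩
    rw [← EReal.coe_add, EReal.coe_le_coe_iff] at hcond'
    rw [EReal.coe_le_coe_iff]
    linarith
  · rw [EReal.top_add_coe, top_le_iff] at hcond'
    exact absurd hcond' (EReal.coe_ne_top _)

lemma Dset_true_true_subset {n : ℕ} {T : Type*} (f : T → En n → EReal) (x : En n) (γ : ℝ)
    (strict restricted : Bool) : Dset f x γ true true ⊆ Dset f x γ strict restricted := by
  rintro v ⟨l, η, ys, hl, hcard, hη, hys, hpos, hlt, hcond, hv⟩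
  refine ⟨l, η, ys, hl, fun _ => hcard rfl, hη, hys, hpos, hlt, ?_, hv⟩
  cases strict
  exacts [hcond.le, hcond]

section Caratheodory

variable {V : Type*} [AddCommGroup V] [Module ℝ V] [FiniteDimensional ℝ V] {ι : Type*}

lemma exists_affine_relation (p : ι → V) {I : Finset ι} (h : Module.finrank ℝ V + 1 < I.card) :
    ∃ d : ι → ℝ, ∑ i ∈ I, d i = 0 ∧ ∑ i ∈ I, d i • p i = 0 ∧ ∃ i ∈ I, d i ≠ 0 := by
  classical
  have hdep : ¬ LinearIndependent ℝ (fun i : I => (p i, (1 : ℝ))) := fun hli => by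
    have := hli.fintype_card_le_finrank
    rw [Fintype.card_coe, Module.finrank_prod, Module.finrank_self] at this
    omega
  obtain ⟨g, hg, j, hj⟩ := Fintype.not_linearIndependent_iff.mp hdep
  set d : ι → ℝ := Function.extend Subtype.val g 0
  have hd : ∀ j : I, d j = g j := fun j => Subtype.val_injective.extend_apply g 0 j
  have hsum : ∑ i ∈ I, d i • (p i, (1 : ℝ)) = 0 := by
    rw [← Finset.sum_coe_sort, ← hg]
    exact Finset.sum_congr rfl fun j _ => by rw [hd]
  refine ⟨d, ?_, ?_, j, j.2, by rwa [hd]⟩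
  · simpa [Prod.snd_sum] using congrArg Prod.snd hsum
  · simpa [Prod.fst_sum] using congrArg Prod.fst hsum

lemma exists_weight_eq_zero_of_finrank_succ_lt_card (p : ι → V) (s : ι → ℝ) {I : Finset ι}
    {w : ι → ℝ} (hw₀ : ∀ i ∈ I, 0 ≤ w i) (h : Module.finrank ℝ V + 1 < I.card) :
    ∃ w' : ι → ℝ, ∃ i₀ ∈ I, w' i₀ = 0 ∧ (∀ i ∈ I, 0 ≤ w' i) ∧
      ∑ i ∈ I, w' i = ∑ i ∈ I, w i ∧ ∑ i ∈ I, w' i • p i = ∑ i ∈ I, w i • p i ∧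
      ∑ i ∈ I, w' i * s i ≤ ∑ i ∈ I, w i * s i := by
  classical
  obtain ⟨d₀, hd₀, hd₀p, hne⟩ := exists_affine_relation p h
  obtain ⟨d, hd, hdp, hds, hpos⟩ : ∃ d : ι → ℝ, ∑ i ∈ I, d i = 0 ∧ ∑ i ∈ I, d i • p i = 0 ∧
      0 ≤ ∑ i ∈ I, d i * s i ∧ ∃ i ∈ I, 0 < d i := by
    rcases le_total 0 (∑ i ∈ I, d₀ i * s i) with hc | hc
    · exact ⟨d₀, hd₀, hd₀p, hc, Finset.exists_pos_of_sum_zero_of_exists_nonzero d₀ hd₀ hne⟩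
    · refine ⟨-d₀, by simp [hd₀], by simp [neg_smul, hd₀p], by simpa [neg_mul] using hc,
        Finset.exists_pos_of_sum_zero_of_exists_nonzero (-d₀) (by simp [hd₀]) ?_⟩
      obtain ⟨i, hi, hi'⟩ := hne
      exact ⟨i, hi, by simpa using hi'⟩
  obtain ⟨i₀, hi₀, hmin⟩ := Finset.exists_min_image (I.filter (0 < d ·)) (fun i => w i / d i)
    (by simpa [Finset.filter_nonempty_iff] using hpos)
  rw [Finset.mem_filter] at hi₀
  set θ := w i₀ / d i₀
  have hθ : 0 ≤ θ := div_nonneg (hw₀ i₀ hi₀.1) hi₀.2.le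
  refine ⟨fun i => w i - θ * d i, i₀, hi₀.1, ?_, fun i hi => ?_, ?_, ?_, ?_⟩
  · simp only [θ, div_mul_cancel₀ _ hi₀.2.ne', sub_self]
  · rcases le_or_gt (d i) 0 with hdi | hdi
    · nlinarith [hw₀ i hi]
    · have := hmin i (Finset.mem_filter.mpr ⟨hi, hdi⟩)
      rw [le_div_iff₀ hdi] at this
      linarith
  · rw [Finset.sum_sub_distrib, ← Finset.mul_sum, hd, mul_zero, sub_zero]
  · simp only [sub_smul, mul_smul, Finset.sum_sub_distrib, ← Finset.smul_sum, hdp, smul_zero,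
      sub_zero]
  · simp only [sub_mul, mul_assoc, Finset.sum_sub_distrib, ← Finset.mul_sum]
    nlinarith

theorem exists_subset_card_le_finrank_succ (p : ι → V) (s : ι → ℝ) (I : Finset ι) (w : ι → ℝ)
    (hw₀ : ∀ i ∈ I, 0 ≤ w i) :
    ∃ J ⊆ I, ∃ w' : ι → ℝ, J.card ≤ Module.finrank ℝ V + 1 ∧ (∀ i ∈ J, 0 < w' i) ∧
      ∑ i ∈ J, w' i = ∑ i ∈ I, w i ∧ ∑ i ∈ J, w' i • p i = ∑ i ∈ I, w i • p i ∧
      ∑ i ∈ J, w' i * s i ≤ ∑ i ∈ I, w i * s i := by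
  classical
  induction I using Finset.strongInduction generalizing w with
  | _ I ih =>
  by_cases hdone : I.card ≤ Module.finrank ℝ V + 1 ∧ ∀ i ∈ I, 0 < w i
  · exact ⟨I, subset_rfl, w, hdone.1, hdone.2, rfl, rfl, le_rfl⟩
  obtain ⟨w', i₀, hi₀, hw'₀, hw', h₁, h₂, h₃⟩ : ∃ w' : ι → ℝ, ∃ i₀ ∈ I, w' i₀ = 0 ∧
      (∀ i ∈ I, 0 ≤ w' i) ∧ ∑ i ∈ I, w' i = ∑ i ∈ I, w i ∧
      ∑ i ∈ I, w' i • p i = ∑ i ∈ I, w i • p i ∧ ∑ i ∈ I, w' i * s i ≤ ∑ i ∈ I, w i * s i := by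
    by_cases hpos : ∀ i ∈ I, 0 < w i
    · refine exists_weight_eq_zero_of_finrank_succ_lt_card p s hw₀ (not_le.mp fun hle => ?_)
      exact hdone ⟨hle, hpos⟩
    · obtain ⟨i₀, hi₀, hle⟩ := not_forall₂.mp hpos
      exact ⟨w, i₀, hi₀, le_antisymm (not_lt.mp hle) (hw₀ i₀ hi₀), hw₀, rfl, rfl, le_rfl⟩
  obtain ⟨J, hJ, w'', hcard, hpos, e₁, e₂, e₃⟩ := ih (I.erase i₀) (Finset.erase_ssubset hi₀) w'
    fun i hi => hw' i (Finset.mem_of_mem_erase hi)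
  refine ⟨J, hJ.trans (Finset.erase_subset _ _), w'', hcard, hpos, ?_, ?_, ?_⟩
  · rw [e₁, Finset.sum_erase _ hw'₀, h₁]
  · rw [e₂, Finset.sum_erase _ (by rw [hw'₀, zero_smul]), h₂]
  · rw [Finset.sum_erase _ (by rw [hw'₀, zero_mul])] at e₃
    exact e₃.trans h₃

end Caratheodory

lemma card_le_enatCard {T : Type*} (s : Finset T) : (s.card : ℕ∞) ≤ ENat.card T := by
  cases finite_or_infinite T
  · have := Fintype.ofFinite T
    rw [ENat.card_eq_coe_fintype_card]
    exact_mod_cast s.card_le_univ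
  · simp

section Aggregation

variable {ι T : Type*} [DecidableEq T] {I : Finset ι} {w : ι → ℝ} (τ : ι → T)

lemma sum_single_apply (t : T) :
    (∑ i ∈ I, Finsupp.single (τ i) (w i)) t = ∑ i ∈ I.filter (τ · = t), w i := by
  simp only [Finsupp.finsetSum_apply, Finsupp.single_apply, Finset.sum_filter]

lemma support_sum_single_of_pos (hw : ∀ i ∈ I, 0 < w i) :
    (∑ i ∈ I, Finsupp.single (τ i) (w i)).support = I.image τ := by
  ext t
  rw [Finsupp.mem_support_iff, sum_single_apply, Finset.mem_image]
  constructor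
  · intro h
    obtain ⟨i, hi, -⟩ := Finset.exists_ne_zero_of_sum_ne_zero h
    exact ⟨i, (Finset.mem_filter.mp hi).1, (Finset.mem_filter.mp hi).2⟩
  · rintro ⟨i, hi, rfl⟩
    exact (Finset.sum_pos (s := I.filter (τ · = τ i)) (fun j hj => hw j (Finset.mem_filter.mp hj).1)
      ⟨i, Finset.mem_filter.mpr ⟨hi, rfl⟩⟩).ne'

lemma sum_support_sum_single {M : Type*} [AddCommMonoid M] (hw : ∀ i ∈ I, 0 < w i) (g : ι → M) :
    ∑ t ∈ (∑ i ∈ I, Finsupp.single (τ i) (w i)).support, ∑ i ∈ I.filter (τ · = t), g i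
      = ∑ i ∈ I, g i := by
  rw [support_sum_single_of_pos τ hw]
  exact Finset.sum_fiberwise_of_maps_to (fun i hi => Finset.mem_image_of_mem τ hi) g

lemma inSimplex_sum_single (hw : ∀ i ∈ I, 0 < w i) (hw₁ : ∑ i ∈ I, w i = 1) :
    inSimplex (∑ i ∈ I, Finsupp.single (τ i) (w i)) := by
  refine ⟨fun t => ⟨?_, ?_⟩, ?_⟩ <;> simp only [sum_single_apply]
  · exact Finset.sum_nonneg fun i hi => (hw i (Finset.mem_filter.mp hi).1).le
  · exact hw₁ ▸ Finset.sum_le_sum_of_subset_of_nonneg (Finset.filter_subset _ _)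
      fun i hi _ => (hw i hi).le
  · exact (sum_support_sum_single τ hw w).trans hw₁

end Aggregation

lemma mem_Dset_of_lt {n : ℕ} {T : Type*} (f : T → En n → EReal) (x : En n) {γ R : ℝ}
    {l : T →₀ ℝ} {η ρ : T → ℝ} {ys : T → En n} (hl : inSimplex l) (hcard : l.support.card ≤ n + 1)
    (hη : ∀ t, 0 ≤ η t) (hys : ∀ t ∈ l.support, ys t ∈ eSub (f t) (η t) x)
    (hρ : ∀ t ∈ l.support, f t x = ρ t) (hR : ⨆ t, f t x = R)
    (hlt : R + ∑ t ∈ l.support, l t * η t - γ < ∑ t ∈ l.support, l t * ρ t) :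
    ∑ t ∈ l.support, l t • ys t ∈ Dset f x γ true true := by
  have hρR : ∑ t ∈ l.support, l t * ρ t ≤ R := by
    calc ∑ t ∈ l.support, l t * ρ t ≤ ∑ t ∈ l.support, l t * R := Finset.sum_le_sum fun t ht =>
          mul_le_mul_of_nonneg_left (EReal.coe_le_coe_iff.mp
            (hρ t ht ▸ hR ▸ le_iSup (fun t => f t x) t)) (hl.1 t).1
      _ = R := by rw [← Finset.sum_mul, hl.2, one_mul]
  refine ⟨l, η, ys, hl, fun _ => le_min (by exact_mod_cast hcard) (card_le_enatCard _), hη, hys,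
    Finset.sum_nonneg fun t _ => mul_nonneg (hl.1 t).1 (hη t), by linarith, ?_, rfl⟩
  rw [if_pos rfl, EReal.coe_sum_mul hρ, hR, ← EReal.coe_add, EReal.coe_lt_coe_iff]
  linarith

/-- The points with the same index `t = τ i` are merged into a single subgradient of `f t`
by `sum_smul_mem_eSub`. -/
lemma sum_smul_mem_Dset {n : ℕ} {T : Type*} (f : T → En n → EReal) (x : En n) {γ R : ℝ}
    {ι : Type*} {I : Finset ι} {w η ρ : ι → ℝ} {τ : ι → T} {p : ι → En n}
    (hw : ∀ i ∈ I, 0 < w i) (hw₁ : ∑ i ∈ I, w i = 1) (hcard : I.card ≤ n + 1)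
    (hp : ∀ i ∈ I, p i ∈ eSub (f (τ i)) (η i) x) (hρ : ∀ i ∈ I, f (τ i) x = ρ i)
    (hR : ⨆ t, f t x = R) (hlt : R + ∑ i ∈ I, w i * η i - γ < ∑ i ∈ I, w i * ρ i) :
    ∑ i ∈ I, w i • p i ∈ Dset f x γ true true := by
  have := Classical.decEq T
  set l : T →₀ ℝ := ∑ i ∈ I, Finsupp.single (τ i) (w i)
  have hl := inSimplex_sum_single τ hw hw₁
  have hsupp := support_sum_single_of_pos τ hw
  have hscale : ∀ t ∈ l.support, ∀ {M : Type} [AddCommGroup M] [Module ℝ M] (a : ι → M),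
      l t • ∑ i ∈ I.filter (τ · = t), (w i / l (τ i)) • a i
        = ∑ i ∈ I.filter (τ · = t), w i • a i := by
    intro t ht M _ _ a
    rw [Finset.smul_sum]
    refine Finset.sum_congr rfl fun i hi => ?_
    rw [(Finset.mem_filter.mp hi).2, smul_smul, mul_div_cancel₀ _ (Finsupp.mem_support_iff.mp ht)]
  have hρT : ∀ t ∈ l.support, f t x = (f t x).toReal := fun t ht => by
    obtain ⟨i, hi, rfl⟩ := Finset.mem_image.mp (hsupp ▸ ht)
    rw [hρ i hi, EReal.toReal_coe]
  have hsum_ρ : ∑ t ∈ l.support, l t * (f t x).toReal = ∑ i ∈ I, w i * ρ i := by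
    rw [← sum_support_sum_single τ hw]
    refine Finset.sum_congr rfl fun t _ => ?_
    rw [sum_single_apply, Finset.sum_mul]
    refine Finset.sum_congr rfl fun i hi => ?_
    obtain ⟨hiI, rfl⟩ := Finset.mem_filter.mp hi
    rw [hρ i hiI, EReal.toReal_coe]
  have hsum_η : ∑ t ∈ l.support, l t * ∑ i ∈ I.filter (τ · = t), (w i / l (τ i)) * η i
      = ∑ i ∈ I, w i * η i := by
    rw [← sum_support_sum_single τ hw]
    exact Finset.sum_congr rfl fun t ht => by simpa only [smul_eq_mul] using hscale t ht η
  have hsum_p : ∑ t ∈ l.support, l t • ∑ i ∈ I.filter (τ · = t), (w i / l (τ i)) • p i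
      = ∑ i ∈ I, w i • p i := by
    rw [← sum_support_sum_single τ hw]
    exact Finset.sum_congr rfl fun t ht => hscale t ht p
  have hu : ∀ t i, i ∈ I.filter (τ · = t) → 0 ≤ w i / l (τ i) := fun t i hi =>
    div_nonneg (hw i (Finset.mem_filter.mp hi).1).le (hl.1 _).1
  rw [← hsum_p]
  refine mem_Dset_of_lt f x hl (hsupp ▸ Finset.card_image_le.trans hcard)
    (fun t => Finset.sum_nonneg fun i hi => mul_nonneg (hu t i hi)
      (nonneg_of_mem_eSub (hp i (Finset.mem_filter.mp hi).1)))
    (fun t ht => sum_smul_mem_eSub (hu t) ?_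
      fun i hi => (Finset.mem_filter.mp hi).2 ▸ hp i (Finset.mem_filter.mp hi).1)
    hρT hR (by rwa [hsum_η, hsum_ρ])
  rw [Finset.sum_congr rfl fun i hi => by rw [(Finset.mem_filter.mp hi).2], ← Finset.sum_div,
    ← sum_single_apply, div_self (Finsupp.mem_support_iff.mp ht)]

section Separation

lemma exists_separation_inner_add_mul {E : Type*} [NormedAddCommGroup E] [InnerProductSpace ℝ E]
    [CompleteSpace E] {K : Set (E × ℝ)} (hK : Convex ℝ K) (hKc : IsClosed K) {q : E × ℝ}
    (hq : q ∉ K) :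
    ∃ (u : E) (a β : ℝ), ⟪u, q.1⟫ + q.2 * a < β ∧ ∀ k ∈ K, β < ⟪u, k.1⟫ + k.2 * a := by
  obtain ⟨φ, β, hφq, hφK⟩ := geometric_hahn_banach_point_closed hK hKc hq
  set u := (InnerProductSpace.toDual ℝ E).symm (φ.comp (ContinuousLinearMap.inl ℝ E ℝ))
  have hφ : ∀ k : E × ℝ, φ k = ⟪u, k.1⟫ + k.2 * φ (0, 1) := fun k => by
    rw [InnerProductSpace.toDual_symm_apply]
    conv_lhs => rw [show k = (k.1, 0) + k.2 • ((0 : E), (1 : ℝ)) by ext <;> simp]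
    rw [map_add, map_smul, smul_eq_mul]
    rfl
  exact ⟨u, φ (0, 1), β, hφ q ▸ hφq, fun k hk => hφ k ▸ hφK k hk⟩

variable {n : ℕ}

lemma inner_sub_le_of_forall_epiS_lt {H : En n → EReal} {u : En n} {a β : ℝ} (ha : 0 < a)
    (h : ∀ p (s : ℝ), H p ≤ s → β < ⟪u, p⟫ + s * a) (p : En n) :
    ((⟪-a⁻¹ • u, p⟫ - -(β / a) : ℝ) : EReal) ≤ H p := by
  refine le_of_forall_gt_imp_ge_of_dense fun e he => ?_
  induction e using EReal.rec
  · exact absurd he not_lt_bot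
  · rename_i s
    have hs := h p s he.le
    rw [EReal.coe_le_coe_iff, real_inner_smul_left, ← sub_nonneg]
    have : s - (-a⁻¹ * ⟪u, p⟫ - -(β / a)) = (⟪u, p⟫ + s * a - β) / a := by field_simp; ring
    rw [this]
    exact div_nonneg (by linarith) ha.le
  · exact le_top

lemma nonneg_of_forall_epiS_lt {H : En n → EReal} {u p : En n} {a β s : ℝ} (hs : H p ≤ s)
    (h : ∀ p (s : ℝ), H p ≤ s → β < ⟪u, p⟫ + s * a) : 0 ≤ a := by
  by_contra! ha
  have h₁ := h p (max s ((β - ⟪u, p⟫) / a)) (hs.trans (EReal.coe_le_coe_iff.mpr (le_max_left _ _)))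
  have h₂ : max s ((β - ⟪u, p⟫) / a) * a ≤ (β - ⟪u, p⟫) / a * a :=
    mul_le_mul_of_nonpos_right (le_max_right _ _) ha.le
  rw [div_mul_cancel₀ _ ha.ne] at h₂
  linarith

/-- One half of the Fenchel–Moreau theorem. -/
theorem mem_closure_convexHull_epiS_of_conjF_conjF_lt {H : En n → EReal} {x : En n} {r : ℝ}
    (hH : ∀ p, ((⟪x, p⟫ - r : ℝ) : EReal) ≤ H p) {y : En n} {c : ℝ}
    (hc : conjF (conjF H) y < c) : (y, c) ∈ closure (convexHull ℝ (epiS H)) := by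
  by_contra hout
  obtain ⟨u, a, β, hy, hK⟩ :=
    exists_separation_inner_add_mul (convex_convexHull ℝ _).closure isClosed_closure hout
  have hepi : ∀ p (s : ℝ), H p ≤ s → β < ⟪u, p⟫ + s * a := fun p s hs =>
    hK (p, s) (subset_closure (subset_convexHull ℝ _ hs))
  have hxy : ⟪y, x⟫ - r < c :=
    EReal.coe_lt_coe_iff.mp ((le_conjF_conjF_of_forall_le hH y).trans_lt hc)
  obtain ⟨p₀, s₀, hs₀⟩ : ∃ (p : En n) (s : ℝ), H p ≤ s := by
    by_contra! hnone
    have := le_conjF_conjF_of_forall_le (v := 0) (d := -c)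
      (fun p => (hnone p _).le) y
    rw [inner_zero_right, zero_sub, neg_neg] at this
    exact this.not_gt hc
  have ha : 0 ≤ a := nonneg_of_forall_epiS_lt hs₀ hepi
  -- Tilting the separating hyperplane towards the minorant `⟪x, ·⟫ - r` makes it non-vertical.
  set k := (β - ⟪u, y⟫ - c * a) / (2 * (c - ⟪y, x⟫ + r))
  have hxy' : 0 < c - ⟪y, x⟫ + r := by linarith
  have hk : 0 < k := div_pos (by linarith) (by linarith)
  have hk' : k * (c - ⟪y, x⟫ + r) < β - ⟪u, y⟫ - c * a := by
    have : k * (c - ⟪y, x⟫ + r) = (β - ⟪u, y⟫ - c * a) / 2 := by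
      simp only [k]; field_simp
    linarith
  have htilt : ∀ p (s : ℝ), H p ≤ s → β - k * r < ⟪u - k • x, p⟫ + s * (a + k) := by
    intro p s hs
    have h1 := hepi p s hs
    have h2 : ⟪x, p⟫ - r ≤ s := EReal.coe_le_coe_iff.mp ((hH p).trans hs)
    rw [inner_sub_left, real_inner_smul_left]
    nlinarith
  have hlow := le_conjF_conjF_of_forall_le
    (inner_sub_le_of_forall_epiS_lt (by linarith : 0 < a + k) htilt) y
  have hval : c < ⟪y, -(a + k)⁻¹ • (u - k • x)⟫ - -((β - k * r) / (a + k)) := by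
    have hak : 0 < a + k := by linarith
    rw [real_inner_smul_right, inner_sub_right, real_inner_smul_right, real_inner_comm u y,
      ← sub_pos]
    have : -(a + k)⁻¹ * (⟪u, y⟫ - k * ⟪y, x⟫) - -((β - k * r) / (a + k)) - c
        = (β - ⟪u, y⟫ - c * a - k * (c - ⟪y, x⟫ + r)) / (a + k) := by field_simp; ring
    rw [this]
    exact div_pos (by linarith) hak
  exact (EReal.coe_lt_coe_iff.mpr hval).not_ge (hlow.trans hc.le)

end Separation

section Approximation

variable {n : ℕ}

lemma exists_conjF_lt_of_iInf_lt {g : En n → EReal} {x : En n} {r ε : ℝ} (hr : g x = r)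
    (h : ⨅ y, (conjF g y + g x - ((⟪y, x⟫ : ℝ) : EReal)) < ε) :
    ∃ y, conjF g y < ((⟪y, x⟫ - r + ε : ℝ) : EReal) := by
  rw [hr] at h
  obtain ⟨y, hy⟩ := iInf_lt_iff.mp h
  exact ⟨y, EReal.add_coe_sub_coe_lt_iff.mp hy⟩

lemma iInf_lt_of_mem_eSub {g : En n → EReal} {x y : En n} {ε γ : ℝ} (hy : y ∈ eSub g ε x)
    (hγ : ε < γ) : ⨅ y, (conjF g y + g x - ((⟪y, x⟫ : ℝ) : EReal)) < γ := by
  obtain ⟨r, hr, hle⟩ := mem_eSub_iff.mp hy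
  refine (iInf_le _ y).trans_lt ?_
  rw [hr]
  exact (EReal.add_coe_sub_coe_le_iff.mpr hle).trans_lt (EReal.coe_lt_coe_iff.mpr hγ)

lemma mem_closure_setOf_conjF_lt {g : En n → EReal} {x y₀ y₁ : En n} {b : ℝ}
    (h₀ : conjF g y₀ ≤ ((⟪y₀, x⟫ + b : ℝ) : EReal))
    (h₁ : conjF g y₁ < ((⟪y₁, x⟫ + b : ℝ) : EReal)) :
    y₀ ∈ closure {y | conjF g y < ((⟪y, x⟫ + b : ℝ) : EReal)} := by
  obtain ⟨A, hA, hAlt⟩ := EReal.lt_iff_exists_real_btwn.mp h₁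
  rw [EReal.coe_lt_coe_iff] at hAlt
  have hcont : Continuous fun s : ℝ => (1 - s) • y₀ + s • y₁ := by fun_prop
  refine mem_closure_of_tendsto (f := fun s : ℝ => (1 - s) • y₀ + s • y₁)
    (b := nhdsWithin (0 : ℝ) (Ioi 0)) ?_ ?_
  · simpa using (hcont.tendsto 0).mono_left nhdsWithin_le_nhds
  · filter_upwards [Ioo_mem_nhdsGT one_pos] with s hs
    refine (conjF_combo_le h₀ hA.le hs.1.le hs.2.le).trans_lt (EReal.coe_lt_coe_iff.mpr ?_)
    rw [inner_add_left, real_inner_smul_left, real_inner_smul_left]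
    nlinarith [hs.1]

variable {T : Type*} (f : T → En n → EReal) (x : En n)

lemma inner_sub_le_iInf_conjF {r : ℝ} (hr : ⨆ t, f t x = r) (p : En n) :
    ((⟪x, p⟫ - r : ℝ) : EReal) ≤ ⨅ t, conjF (f t) p := by
  refine le_iInf fun t => ?_
  have hfr : f t x ≤ r := hr ▸ le_iSup (fun t => f t x) t
  rw [EReal.coe_sub, real_inner_comm]
  exact (EReal.sub_le_sub le_rfl hfr).trans (inner_sub_le_conjF (f t) p x)

lemma mem_Dset_of_mem_convexHull {r ε : ℝ} (hr : ⨆ t, f t x = r) {q : En n × ℝ}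
    (hq : q ∈ convexHull ℝ (epiS fun p => ⨅ t, conjF (f t) p))
    (hlt : q.2 < ⟪q.1, x⟫ - r + ε) : q.1 ∈ Dset f x ε true true := by
  have : Nonempty T := by
    by_contra hT
    rw [not_nonempty_iff] at hT
    rw [iSup_of_empty] at hr
    exact EReal.bot_ne_coe r hr
  rw [convexHull_eq] at hq
  obtain ⟨ι, I₀, w₀, z, hw₀, hw₀₁, hz, rfl⟩ := hq
  rw [Finset.centerMass_eq_of_sum_1 _ _ hw₀₁, Prod.fst_sum, Prod.snd_sum] at hlt
  rw [Finset.centerMass_eq_of_sum_1 _ _ hw₀₁, Prod.fst_sum]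
  simp only [Prod.smul_fst, Prod.smul_snd, smul_eq_mul, sum_inner, real_inner_smul_left] at hlt ⊢
  set cost : ι → ℝ := fun i => (z i).2 - ⟪(z i).1, x⟫
  obtain ⟨I, hI, w, hcard, hw, hw₁, hwp, hws⟩ :=
    exists_subset_card_le_finrank_succ (fun i => (z i).1) cost I₀ w₀ hw₀
  rw [finrank_euclideanSpace_fin] at hcard
  have hcost : ∑ i ∈ I, w i * cost i < ε - r := by
    refine hws.trans_lt ?_
    simp only [cost, mul_sub, Finset.sum_sub_distrib]
    linarith
  obtain ⟨θ, hθ, hθε⟩ : ∃ θ : ℝ, 0 < θ ∧ ∑ i ∈ I, w i * cost i + θ < ε - r :=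
    ⟨(ε - r - ∑ i ∈ I, w i * cost i) / 2, by linarith, by linarith⟩
  have hτ : ∀ i ∈ I, ∃ t, conjF (f t) (z i).1 < (((z i).2 + θ : ℝ) : EReal) := fun i hi =>
    iInf_lt_iff.mp ((hz i (hI hi)).trans_lt (EReal.coe_lt_coe_iff.mpr (by linarith)))
  choose! τ hτ using hτ
  have hρ : ∀ i ∈ I, ∃ ρ : ℝ, f (τ i) x = ρ ∧
      (z i).1 ∈ eSub (f (τ i)) ((z i).2 + θ + ρ - ⟪(z i).1, x⟫) x := fun i hi =>
    exists_mem_eSub_of_conjF_lt (hτ i hi)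
      (ne_top_of_le_ne_top (hr ▸ EReal.coe_ne_top r) (le_iSup (fun t => f t x) (τ i)))
  choose! ρ hρ hmem using hρ
  rw [← hwp]
  refine sum_smul_mem_Dset f x hw (hw₁.trans hw₀₁) hcard hmem hρ hr ?_
  have : ∑ i ∈ I, w i * ((z i).2 + θ + ρ i - ⟪(z i).1, x⟫) - ∑ i ∈ I, w i * ρ i
      = ∑ i ∈ I, w i * cost i + θ * ∑ i ∈ I, w i := by
    simp only [cost, ← Finset.sum_sub_distrib, Finset.mul_sum, ← Finset.sum_add_distrib]
    exact Finset.sum_congr rfl fun i _ => by ring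
  rw [hw₁.trans hw₀₁] at this
  linarith

end Approximation

section Representation

variable {n : ℕ} {T : Type*} (f : T → En n → EReal) (x : En n)

lemma mem_closure_Dset_of_conjF_lt
    (hbi : ∀ z, conjF (conjF (fun w => ⨆ t, f t w)) z = ⨆ t, conjF (conjF (f t)) z)
    {r ε : ℝ} (hr : ⨆ t, f t x = r) {y : En n}
    (hy : conjF (fun w => ⨆ t, f t w) y < ((⟪y, x⟫ - r + ε : ℝ) : EReal)) :
    y ∈ closure (Dset f x ε true true) := by
  set H : En n → EReal := fun p => ⨅ t, conjF (f t) p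
  have hH : conjF H = conjF (conjF fun w => ⨆ t, f t w) := funext fun z => by
    rw [conjF_iInf, hbi]
  obtain ⟨c, hc, hcy⟩ := EReal.lt_iff_exists_real_btwn.mp hy
  rw [← conjF_conjF_conjF, ← hH] at hc
  have hmem := mem_closure_convexHull_epiS_of_conjF_conjF_lt (inner_sub_le_iInf_conjF f x hr) hc
  set U : Set (En n × ℝ) := {q | q.2 < ⟪q.1, x⟫ - r + ε}
  have hU : IsOpen U := isOpen_lt (by fun_prop) (by fun_prop)
  have hyc : (y, c) ∈ closure (U ∩ convexHull ℝ (epiS H)) :=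
    hU.inter_closure ⟨EReal.coe_lt_coe_iff.mp hcy, hmem⟩
  exact map_mem_closure continuous_fst hyc fun q hq => mem_Dset_of_mem_convexHull f x hr hq.2 hq.1

lemma eSub_subset_closure_Dset
    (hbi : ∀ z, conjF (conjF (fun w => ⨆ t, f t w)) z = ⨆ t, conjF (conjF (f t)) z) {ε : ℝ}
    (hε : ⨅ y, (conjF (fun w => ⨆ t, f t w) y + (⨆ t, f t x) - ((⟪y, x⟫ : ℝ) : EReal)) < ε) :
    eSub (fun w => ⨆ t, f t w) ε x ⊆ closure (Dset f x ε true true) := by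
  intro y₀ hy₀
  obtain ⟨r, hr, h₀⟩ := mem_eSub_iff.mp hy₀
  obtain ⟨y₁, h₁⟩ := exists_conjF_lt_of_iInf_lt hr hε
  have hsub : {y | conjF (fun w => ⨆ t, f t w) y < ((⟪y, x⟫ + (ε - r) : ℝ) : EReal)}
      ⊆ closure (Dset f x ε true true) := fun y hy =>
    mem_closure_Dset_of_conjF_lt f x hbi hr (hy.trans_eq (by congr 1; ring))
  exact closure_minimal hsub isClosed_closure
    (mem_closure_setOf_conjF_lt (h₀.trans_eq (by congr 1; ring)) (h₁.trans_eq (by congr 1; ring)))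

lemma closure_Dset_subset_eSub (γ : ℝ) (strict restricted : Bool) :
    closure (Dset f x γ strict restricted) ⊆ eSub (fun w => ⨆ t, f t w) γ x :=
  closure_minimal (Dset_subset_eSub f x γ strict restricted) (isClosed_eSub _ γ x)

lemma eSub_eq_closure_Dset
    (hbi : ∀ z, conjF (conjF (fun w => ⨆ t, f t w)) z = ⨆ t, conjF (conjF (f t)) z) {ε : ℝ}
    (hε : ⨅ y, (conjF (fun w => ⨆ t, f t w) y + (⨆ t, f t x) - ((⟪y, x⟫ : ℝ) : EReal)) < ε)
    (strict restricted : Bool) :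
    eSub (fun w => ⨆ t, f t w) ε x = closure (Dset f x ε strict restricted) :=
  ((eSub_subset_closure_Dset f x hbi hε).trans
    (closure_mono (Dset_true_true_subset f x ε strict restricted))).antisymm
    (closure_Dset_subset_eSub f x ε strict restricted)

lemma eSub_eq_iInter_closure_Dset
    (hbi : ∀ z, conjF (conjF (fun w => ⨆ t, f t w)) z = ⨆ t, conjF (conjF (f t)) z) (ε : ℝ)
    (restricted : Bool) :
    eSub (fun w => ⨆ t, f t w) ε x = ⋂ γ > ε, closure (Dset f x γ false restricted) := by
  refine subset_antisymm (fun y hy => mem_iInter₂.mpr fun γ hγ => ?_)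
    fun y hy => mem_eSub_of_forall_lt fun γ hγ =>
      closure_Dset_subset_eSub f x γ false restricted (mem_iInter₂.mp hy γ hγ)
  rw [← eSub_eq_closure_Dset f x hbi (iInf_lt_of_mem_eSub hy hγ)]
  exact eSub_mono hγ.le x hy

end Representation

/-- representation of `∂_ε f(x)` for `f = sup_t f_t` with
`f** = sup_t f_t**`: if `ε > inf_y (f*(y) + f(x) − ⟨y,x⟩)` then `∂_ε f(x)` is the
closure of the set of the above convex combinations (with strict inequality and
bound `ε`); consequently for every `ε ≥ 0`, `∂_ε f(x) = ⋂_{γ>ε} cl(...)` (with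
non-strict inequality and bound `γ`); in both formulas one may restrict to `λ`
with `#supp λ ≤ min (n+1) (#T)`. -/
theorem statement7 {n : ℕ} {T : Type*} (f : T → En n → EReal) (x : En n)
    (hbi : ∀ z, conjF (conjF (fun w => ⨆ t, f t w)) z = ⨆ t, conjF (conjF (f t)) z) :
    (∀ ε : ℝ,
      (⨅ y, (conjF (fun w => ⨆ t, f t w) y + (⨆ t, f t x) - ((⟪y, x⟫ : ℝ) : EReal)))
          < (ε : EReal) →
      (eSub (fun w => ⨆ t, f t w) ε x = closure (Dset f x ε true false) ∧
       eSub (fun w => ⨆ t, f t w) ε x = closure (Dset f x ε true true))) ∧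
    (∀ ε : ℝ, 0 ≤ ε →
      (eSub (fun w => ⨆ t, f t w) ε x = ⋂ γ > ε, closure (Dset f x γ false false) ∧
       eSub (fun w => ⨆ t, f t w) ε x = ⋂ γ > ε, closure (Dset f x γ false true))) := by
  exact ⟨fun ε hε => ⟨eSub_eq_closure_Dset f x hbi hε true false,
      eSub_eq_closure_Dset f x hbi hε true true⟩,
    fun ε _ => ⟨eSub_eq_iInter_closure_Dset f x hbi ε false,
      eSub_eq_iInter_closure_Dset f x hbi ε true⟩⟩
end
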